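/- arXiv:1312.7019 — 4 statements merged into one kernel-verified Lean document; each statement's English description precedes it below -/
import Mathlib

section
/- Let 0 → A → B → C → 0 be a central extension of G-groups. The fibers of the induced map i_* : H¹(G,A) → H¹(G,B) are exactly the orbits of the H⁰(G,C)-action on H¹(G,A). -/
/-- for a central extension `0 → A → B → C → 0` of `G`-groups, the
fibers of `i_* : H¹(G,A) → H¹(G,B)` are exactly the orbits of the
`H⁰(G,C) = C^G` action on `H¹(G,A)`: `i_*[x] = i_*[x']` iff `[x'] = c·[x]` for
some invariant `c = q(b)`. -/
theorem fibers_are_H0_orbits {G A B C : Type*} [Group G] [CommGroup A] [Group B]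
    [Group C] [MulDistribMulAction G A] [MulDistribMulAction G B]
    [MulDistribMulAction G C]
    (i : A →* B) (q : B →* C)
    (hi : Function.Injective i) (hq : Function.Surjective q)
    (hexact : ∀ b : B, q b = 1 ↔ ∃ a : A, i a = b)
    (hcent : ∀ (a : A) (b : B), i a * b = b * i a)
    (hieq : ∀ (g : G) (a : A), i (g • a) = g • i a)
    (hqeq : ∀ (g : G) (b : B), q (g • b) = g • q b)
    (x x' : G → A)
    (hx : ∀ g h : G, x (g * h) = x g * g • x h)
    (hx' : ∀ g h : G, x' (g * h) = x' g * g • x' h) :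
    (∃ b : B, ∀ g : G, i (x' g) = b * i (x g) * (g • b)⁻¹) ↔
    (∃ b : B, (∀ g : G, g • q b = q b) ∧
        ∃ a : A, ∀ g : G,
          i (x' g) = i a * (b * i (x g) * (g • b)⁻¹) * (g • i a)⁻¹) := by
  constructor
  · rintro ⟨b, hb⟩
    refine ⟨b, fun g => ?_, 1, fun g => by simpa using hb g⟩
    have h1 : q (i (x' g)) = 1 := (hexact _).2 ⟨x' g, rfl⟩
    have h2 : q (b * i (x g) * (g • b)⁻¹) = q b * (g • q b)⁻¹ := by
      have : q (i (x g)) = 1 := (hexact _).2 ⟨x g, rfl⟩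
      simp [this, hqeq]
    rw [hb g, h2] at h1
    have := mul_inv_eq_one.mp h1
    exact this.symm
  · rintro ⟨b, hinv, a, ha⟩
    refine ⟨i a * b, fun g => ?_⟩
    have : (g • (i a * b))⁻¹ = (g • b)⁻¹ * (g • i a)⁻¹ := by
      rw [smul_mul', mul_inv_rev]
    rw [this, ha g]
    group
end

section
/- Let 0 → A → B → C → 0 be a central extension of G-groups, and suppose that for every 1-cocycle z ∈ Z¹(G,C) the twisted action ρ_z of G on C (given by ρ_z(g)(c) = z(g)·(g·c)·z(g)⁻¹) has trivial invariants, i.e. C^{ρ_z} = {e}. Then the action of H¹(G,A) on H¹(G,B) by pointwise multiplication of cocycles is free. -/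
/-- Lemma 4.2: for a central extension `0 → A → B → C → 0` of
`G`-groups such that every twisted action `ρ_z` (for `z ∈ Z¹(G,C)`) on `C` has
trivial invariants, the action of `H¹(G,A)` on `H¹(G,B)` by pointwise
multiplication of cocycles is free: if `[x]·[y] = [y]` then `[x]` is trivial. -/
theorem H1_action_free {G A B C : Type*} [Group G] [CommGroup A] [Group B]
    [Group C] [MulDistribMulAction G A] [MulDistribMulAction G B]
    [MulDistribMulAction G C]
    (i : A →* B) (q : B →* C)
    (hi : Function.Injective i) (hq : Function.Surjective q)
    (hexact : ∀ b : B, q b = 1 ↔ ∃ a : A, i a = b)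
    (hcent : ∀ (a : A) (b : B), i a * b = b * i a)
    (hieq : ∀ (g : G) (a : A), i (g • a) = g • i a)
    (hqeq : ∀ (g : G) (b : B), q (g • b) = g • q b)
    (htriv : ∀ z : G → C, (∀ g h : G, z (g * h) = z g * g • z h) →
      ∀ c : C, (∀ g : G, z g * g • c * (z g)⁻¹ = c) → c = 1)
    (x : G → A) (y : G → B)
    (hx : ∀ g h : G, x (g * h) = x g * g • x h)
    (hy : ∀ g h : G, y (g * h) = y g * g • y h)
    (hfix : ∃ b : B, ∀ g : G, i (x g) * y g = b * y g * (g • b)⁻¹) :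
    ∃ a : A, ∀ g : G, x g = a * (g • a)⁻¹ := by
  obtain ⟨b, hb⟩ := hfix
  have hz : ∀ g h : G, q (y (g * h)) = q (y g) * g • q (y h) := by
    intro g h; rw [hy, map_mul, hqeq]
  have hc : q b = 1 := by
    apply htriv (fun g => q (y g)) hz
    intro g
    have hq1 : q (i (x g)) = 1 := (hexact (i (x g))).mpr ⟨x g, rfl⟩
    have h1 : q b * q (y g) * (g • q b)⁻¹ = q (y g) := by
      have := congrArg q (hb g)
      simpa [map_mul, hqeq, hq1] using this.symm
    have h2 : q b * q (y g) = q (y g) * (g • q b) :=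
      (mul_inv_eq_iff_eq_mul.mp h1)
    show q (y g) * g • q b * (q (y g))⁻¹ = q b
    rw [← h2]
    group
  obtain ⟨a, ha⟩ := (hexact b).mp hc
  refine ⟨a, fun g => ?_⟩
  apply hi
  have : i (x g) * y g = i (a * (g • a)⁻¹) * y g := by
    rw [hb g, ← ha, map_mul, map_inv, hieq]
    rw [mul_assoc, mul_assoc]
    congr 1
    rw [← hieq, ← map_inv]
    exact (hcent _ _).symm
  exact mul_right_cancel this
end

section
/- Let 0 → A → B → C → 0 be a central extension of G-groups such that the surjection B → C admits a (set-theoretic) section. Then the action of H¹(G,A) on H¹(G,B) by pointwise multiplication of cocycles is transitive on each fiber of q_* : H¹(G,B) → H¹(G,C): if q_*[y] = q_*[y'] then [y'] = [x]·[y] for some [x] ∈ H¹(G,A). -/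
/-- Lemma 4.3: for a central extension `0 → A → B → C → 0` of
`G`-groups with `q` surjective (so admitting a set-theoretic section), the
action of `H¹(G,A)` on `H¹(G,B)` is transitive on the fibers of
`q_* : H¹(G,B) → H¹(G,C)`: if `q_*[y] = q_*[y']` then `[y'] = [x]·[y]` for some
class `[x] ∈ H¹(G,A)`. -/
theorem H1_action_transitive_on_fibers {G A B C : Type*} [Group G] [CommGroup A]
    [Group B] [Group C] [MulDistribMulAction G A] [MulDistribMulAction G B]
    [MulDistribMulAction G C]
    (i : A →* B) (q : B →* C)
    (hi : Function.Injective i) (hq : Function.Surjective q)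
    (hexact : ∀ b : B, q b = 1 ↔ ∃ a : A, i a = b)
    (hcent : ∀ (a : A) (b : B), i a * b = b * i a)
    (hieq : ∀ (g : G) (a : A), i (g • a) = g • i a)
    (hqeq : ∀ (g : G) (b : B), q (g • b) = g • q b)
    (y y' : G → B)
    (hy : ∀ g h : G, y (g * h) = y g * g • y h)
    (hy' : ∀ g h : G, y' (g * h) = y' g * g • y' h)
    (hfib : ∃ c : C, ∀ g : G, q (y' g) = c * q (y g) * (g • c)⁻¹) :
    ∃ x : G → A, (∀ g h : G, x (g * h) = x g * g • x h) ∧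
      ∃ b : B, ∀ g : G, y' g = b * (i (x g) * y g) * (g • b)⁻¹ := by
  obtain ⟨c, hc⟩ := hfib
  obtain ⟨b, hb⟩ := hq c
  have key : ∀ g : G, ∃ a : A, i a = b⁻¹ * y' g * (g • b) * (y g)⁻¹ := by
    intro g
    rw [← hexact]
    simp only [map_mul, map_inv, hqeq, hb, hc g]
    group
  choose x hx using key
  have hcomm : ∀ (a : A) (w : B), w * i a = i a * w := fun a w => (hcent a w).symm
  refine ⟨x, ?_, b, ?_⟩
  · intro g h
    apply hi
    rw [map_mul, hieq, hx, hx, hx]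
    have hz : (y g)⁻¹ * (g • (b⁻¹ * y' h * (h • b) * (y h)⁻¹)) =
        (g • (b⁻¹ * y' h * (h • b) * (y h)⁻¹)) * (y g)⁻¹ := by
      rw [← hx h, ← hieq]
      exact hcomm _ _
    rw [mul_assoc (b⁻¹ * y' g * (g • b)) (y g)⁻¹ _, hz]
    rw [hy, hy', mul_smul, smul_mul', smul_mul', smul_mul', smul_inv', smul_inv']
    group
  · intro g
    rw [hx g]
    group
end

section
/- Let 0 → A → B → C → 0 be a central extension of G-groups admitting a G-equivariant-cocycle-compatible set-theoretic section, and let y ∈ Z¹(G,B). If [x]·[y] = [y] in H¹(G,B) for some [x] ∈ H¹(G,A), witnessed by b ∈ B with x(g)·y(g) = b·y(g)·(g·b⁻¹) for all g, then q(b) ∈ C is invariant under the twisted action ρ_{q∘y}, i.e. (q∘y)(g)·(g·q(b))·(q∘y)(g)⁻¹ = q(b) for all g ∈ G. -/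
/-- key computation in Lemma 4.2: for a central extension
`0 → A → B → C → 0` of `G`-groups, if `x ∈ Z¹(G,A)`, `y ∈ Z¹(G,B)` and `b ∈ B`
witnesses `[x]·[y] = [y]`, i.e. `x(g)·y(g) = b·y(g)·(g·b)⁻¹` for all `g`, then
`q(b)` is invariant under the twisted action `ρ_{q∘y}`:
`(q∘y)(g)·(g·q(b))·(q∘y)(g)⁻¹ = q(b)` for all `g`. -/
theorem stabilizer_witness_is_twisted_invariant {G A B C : Type*} [Group G]
    [CommGroup A] [Group B] [Group C] [MulDistribMulAction G A]
    [MulDistribMulAction G B] [MulDistribMulAction G C]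
    (i : A →* B) (q : B →* C)
    (hi : Function.Injective i) (hq : Function.Surjective q)
    (hexact : ∀ b : B, q b = 1 ↔ ∃ a : A, i a = b)
    (hcent : ∀ (a : A) (b : B), i a * b = b * i a)
    (hieq : ∀ (g : G) (a : A), i (g • a) = g • i a)
    (hqeq : ∀ (g : G) (b : B), q (g • b) = g • q b)
    (x : G → A) (y : G → B)
    (hx : ∀ g h : G, x (g * h) = x g * g • x h)
    (hy : ∀ g h : G, y (g * h) = y g * g • y h)
    (b : B) (hb : ∀ g : G, i (x g) * y g = b * y g * (g • b)⁻¹) :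
    ∀ g : G, q (y g) * g • q b * (q (y g))⁻¹ = q b := by
  intro g
  have hqx : q (i (x g)) = 1 := (hexact _).2 ⟨x g, rfl⟩
  have h := congrArg q (hb g)
  simp only [map_mul, map_inv, hqx, one_mul, hqeq] at h
  have h2 : q (y g) * g • q b = q b * q (y g) := eq_mul_inv_iff_mul_eq.mp h
  rw [h2]; group
end
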